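/- arXiv:1402.3893 — 2 statements merged into one kernel-verified Lean document; each statement's English description precedes it below -/
import Mathlib

section
/- Let (W, d) be a complete metric space and R : W → [0,∞) a continuous function. Given x₀ ∈ W and ε₀ > 0, there exist x ∈ W with d(x, x₀) ≤ 2ε₀ and ε ∈ (0, ε₀] such that R(x₀)·ε₀ ≤ R(x)·ε and R(y) ≤ 2·R(x) for all y with d(y, x) ≤ ε. -/
/-- Hofer's lemma. -/
theorem hofer_lemma {W : Type*} [MetricSpace W] [CompleteSpace W]
    (R : W → ℝ) (hRcont : Continuous R) (hRnonneg : ∀ x, 0 ≤ R x)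
    (x₀ : W) (ε₀ : ℝ) (hε₀ : 0 < ε₀) :
    ∃ x : W, ∃ ε : ℝ, dist x x₀ ≤ 2 * ε₀ ∧ 0 < ε ∧ ε ≤ ε₀ ∧
      R x₀ * ε₀ ≤ R x * ε ∧ ∀ y : W, dist y x ≤ ε → R y ≤ 2 * R x := by
  obtain ⟨ε, hεpos, x, hεε₀, hdist, hmul, hbound⟩ := hofer x₀ ε₀ hε₀ hRcont hRnonneg
  exact ⟨x, ε, hdist, hεpos, hεε₀, by linarith [mul_comm ε₀ (R x₀), mul_comm ε (R x)],
    fun y hy => hbound y (by rwa [dist_comm])⟩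
end

section
/- Let C ≥ 1, δ ∈ (0, 1/3], ε ∈ (0, δ/10]. Define on [ε/2, ε] the functions f₁(r) = 4/(2εδ − 3ε²)·(r − ε/2)² − 1 and assume f₂'(r) ≤ (−16C + 2εδ)/(εδ)·(r − ε/2) − ε and 0 ≤ f₁'(r) ≤ 5/(2εδ)·(r − ε/2). Then f₁(r)·f₂'(r) − 2C·f₁'(r) ≥ (7/8)·ε for all r ∈ [ε/2, ε]. -/
/-!
Since `ε ≤ δ / 10`, the quadratic `f₁` stays below `-7/8` on `[ε/2, ε]`, and the bound on `f₂'`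
is nonpositive there, so `f₁ f₂' ≥ -(7/8) f₂'`. Inserting the linear bounds on `f₂'` and `f₁'`,
the terms in `C (r - ε/2) / (εδ)` combine to `(14 - 5) C (r - ε/2) / (εδ)`, which dominates the
leftover `-(7/4) (r - ε/2)` because `εδ ≤ 1/90 ≤ C`.
-/

lemma quadratic_profile_le {ε δ s : ℝ} (hε0 : 0 < ε) (hε : ε ≤ δ / 10) (hs0 : 0 ≤ s)
    (hs : s ≤ ε / 2) : 4 / (2 * ε * δ - 3 * ε ^ 2) * s ^ 2 - 1 ≤ -(7 / 8) := by
  have hden : 0 < 2 * ε * δ - 3 * ε ^ 2 := by nlinarith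
  have hs2 : 4 * s ^ 2 ≤ ε ^ 2 := by nlinarith
  have : 4 / (2 * ε * δ - 3 * ε ^ 2) * s ^ 2 ≤ 1 / 8 := by
    rw [div_mul_eq_mul_div, div_le_iff₀ hden]
    nlinarith
  linarith

lemma linear_slope_bound_nonpos {C ε δ s : ℝ} (hεδ0 : 0 < ε * δ) (hεδ : ε * δ ≤ C)
    (hε0 : 0 ≤ ε) (hs0 : 0 ≤ s) : (-16 * C + 2 * ε * δ) / (ε * δ) * s - ε ≤ 0 := by
  have : (-16 * C + 2 * ε * δ) / (ε * δ) * s ≤ 0 :=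
    mul_nonpos_of_nonpos_of_nonneg (div_nonpos_of_nonpos_of_nonneg (by linarith) hεδ0.le) hs0
  linarith

lemma linear_bounds_combine {C ε δ s : ℝ} (hεδ0 : 0 < ε * δ) (hεδ : ε * δ ≤ C) (hs0 : 0 ≤ s) :
    7 / 8 * ε ≤ -(7 / 8) * ((-16 * C + 2 * ε * δ) / (ε * δ) * s - ε)
      - 2 * C * (5 / (2 * ε * δ) * s) := by
  have key : -(7 / 8) * ((-16 * C + 2 * ε * δ) / (ε * δ) * s - ε)
      - 2 * C * (5 / (2 * ε * δ) * s) = (9 * C / (ε * δ) - 7 / 4) * s + 7 / 8 * ε := by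
    have hε : ε ≠ 0 := left_ne_zero_of_mul hεδ0.ne'
    have hδ : δ ≠ 0 := right_ne_zero_of_mul hεδ0.ne'
    field_simp
    ring
  have hcoef : 7 / 4 ≤ 9 * C / (ε * δ) := by
    rw [le_div_iff₀ hεδ0]
    linarith
  rw [key]
  nlinarith

theorem lutz_case_i_general (C δ ε : ℝ) (hC : 1 ≤ C) (hδ0 : 0 < δ) (hδ : δ ≤ 1 / 3)
    (hε0 : 0 < ε) (hε : ε ≤ δ / 10)
    (f₁ f₁' f₂' : ℝ → ℝ)
    (hf₁ : ∀ r ∈ Set.Icc (ε / 2) ε,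
      f₁ r = 4 / (2 * ε * δ - 3 * ε ^ 2) * (r - ε / 2) ^ 2 - 1)
    (hf₂' : ∀ r ∈ Set.Icc (ε / 2) ε,
      f₂' r ≤ (-16 * C + 2 * ε * δ) / (ε * δ) * (r - ε / 2) - ε)
    (hf₁' : ∀ r ∈ Set.Icc (ε / 2) ε, f₁' r ≤ 5 / (2 * ε * δ) * (r - ε / 2)) :
    ∀ r ∈ Set.Icc (ε / 2) ε, f₁ r * f₂' r - 2 * C * f₁' r ≥ 7 / 8 * ε := by
  intro r hr
  have hs0 : 0 ≤ r - ε / 2 := by linarith [hr.1]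
  have hεδ0 : 0 < ε * δ := by positivity
  have hεδ : ε * δ ≤ C := by nlinarith
  have hf₁_le : f₁ r ≤ -(7 / 8) :=
    (hf₁ r hr).trans_le (quadratic_profile_le hε0 hε hs0 (by linarith [hr.2]))
  have hf₂'_nonpos : f₂' r ≤ 0 :=
    (hf₂' r hr).trans (linear_slope_bound_nonpos hεδ0 hεδ hε0.le hs0)
  calc f₁ r * f₂' r - 2 * C * f₁' r
      ≥ -(7 / 8) * f₂' r - 2 * C * (5 / (2 * ε * δ) * (r - ε / 2)) :=
        sub_le_sub (mul_le_mul_of_nonpos_right hf₁_le hf₂'_nonpos)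
          (mul_le_mul_of_nonneg_left (hf₁' r hr) (by linarith))
    _ ≥ -(7 / 8) * ((-16 * C + 2 * ε * δ) / (ε * δ) * (r - ε / 2) - ε)
          - 2 * C * (5 / (2 * ε * δ) * (r - ε / 2)) := by linarith [hf₂' r hr]
    _ ≥ 7 / 8 * ε := linear_bounds_combine hεδ0 hεδ hs0

/-- Case i estimate in the Lutz twist construction. -/
theorem lutz_case_i (C δ ε : ℝ) (hC : 1 ≤ C) (hδ0 : 0 < δ) (hδ : δ ≤ 1 / 3)
    (hε0 : 0 < ε) (hε : ε ≤ δ / 10)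
    (f₁ f₁' f₂' : ℝ → ℝ)
    (hf₁ : ∀ r ∈ Set.Icc (ε / 2) ε,
      f₁ r = 4 / (2 * ε * δ - 3 * ε ^ 2) * (r - ε / 2) ^ 2 - 1)
    (hf₂' : ∀ r ∈ Set.Icc (ε / 2) ε,
      f₂' r ≤ (-16 * C + 2 * ε * δ) / (ε * δ) * (r - ε / 2) - ε)
    (hf₁'nonneg : ∀ r ∈ Set.Icc (ε / 2) ε, 0 ≤ f₁' r)
    (hf₁' : ∀ r ∈ Set.Icc (ε / 2) ε, f₁' r ≤ 5 / (2 * ε * δ) * (r - ε / 2)) :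
    ∀ r ∈ Set.Icc (ε / 2) ε, f₁ r * f₂' r - 2 * C * f₁' r ≥ 7 / 8 * ε :=
  lutz_case_i_general C δ ε hC hδ0 hδ hε0 hε f₁ f₁' f₂' hf₁ hf₂' hf₁'
end
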